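/- Let A, B be nonempty closed subsets of a complete metric space (X,d), B approximatively compact with respect to A, A₀ ≠ ∅, (A,B) with the p-property, T(A₀) ⊆ B₀, and T : A → B a generalized F-proximal contraction of the first kind. Then for any x₀ ∈ A₀, the sequence (xₙ) defined recursively by d(xₙ₊₁, T xₙ) = d(A,B) is well-defined, uniquely determined, and converges to the unique best proximity point x of T. -/

import Mathlib

open Filter Topology

noncomputable def setDist {X : Type*} [MetricSpace X] (A B : Set X) : ℝ :=
  sInf (Set.image2 dist A B)

def pProperty {X : Type*} [MetricSpace X] (A B : Set X) : Prop :=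
  ∀ u₁ ∈ A, ∀ u₂ ∈ A, ∀ v₁ ∈ B, ∀ v₂ ∈ B,
    dist u₁ v₁ = setDist A B → dist u₂ v₂ = setDist A B → dist u₁ u₂ = dist v₁ v₂

def A0 {X : Type*} [MetricSpace X] (A B : Set X) : Set X :=
  {x ∈ A | ∃ y ∈ B, dist x y = setDist A B}

def B0 {X : Type*} [MetricSpace X] (A B : Set X) : Set X :=
  {y ∈ B | ∃ x ∈ A, dist x y = setDist A B}

def approxCompact {X : Type*} [MetricSpace X] (A B : Set X) : Prop :=
  ∀ x ∈ A, ∀ y : ℕ → X, (∀ n, y n ∈ B) →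
    Tendsto (fun n => dist x (y n)) atTop (nhds (Metric.infDist x B)) →
    ∃ z ∈ B, ∃ φ : ℕ → ℕ, StrictMono φ ∧ Tendsto (y ∘ φ) atTop (nhds z)

def OmegaF (F : ℝ → ℝ) : Prop :=
  (∀ x y : ℝ, 0 < x → x < y → F x < F y) ∧
  (∀ α : ℕ → ℝ, (∀ n, 0 < α n) →
    (Tendsto α atTop (nhds 0) ↔ Tendsto (fun n => F (α n)) atTop atBot)) ∧
  (∃ k ∈ Set.Ioo (0:ℝ) 1,
    Tendsto (fun t => t ^ k * F t) (nhdsWithin 0 (Set.Ioi 0)) (nhds 0))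

def HRContraction {X : Type*} [MetricSpace X] (T : X → X) (F : ℝ → ℝ)
    (a b c e τ L : ℝ) : Prop :=
  ∀ x y : X, 0 < dist (T x) (T y) →
    τ + F (dist (T x) (T y)) ≤
      F (a * dist x y + b * dist x (T x) + c * dist y (T y) +
         e * dist x (T y) + L * dist y (T x))

def GFProximal {X : Type*} [MetricSpace X] (A B : Set X) (T : X → X) (F : ℝ → ℝ)
    (a b c h τ : ℝ) : Prop :=
  ∀ u₁ ∈ A, ∀ u₂ ∈ A, ∀ x₁ ∈ A, ∀ x₂ ∈ A,
    dist u₁ (T x₁) = setDist A B → dist u₂ (T x₂) = setDist A B → u₁ ≠ u₂ →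
      τ + F (dist u₁ u₂) ≤
        F (a * dist x₁ x₂ + b * dist u₁ x₁ + c * dist u₂ x₂ +
           h * (dist u₂ x₁ + dist u₁ x₂))

section helpers
variable {X : Type*} [MetricSpace X]

lemma setDist_le_dist {A B : Set X} {x y : X} (hx : x ∈ A) (hy : y ∈ B) :
    setDist A B ≤ dist x y := by
  apply csInf_le
  · refine ⟨0, ?_⟩
    rintro d ⟨u, hu, v, hv, rfl⟩
    exact dist_nonneg
  · exact ⟨x, hx, y, hy, rfl⟩

lemma setDist_le_infDist {A B : Set X} {x : X} (hx : x ∈ A) (hB : B.Nonempty) :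
    setDist A B ≤ Metric.infDist x B := by
  by_contra hlt
  push_neg at hlt
  obtain ⟨y, hy, hdy⟩ := (Metric.infDist_lt_iff hB).mp hlt
  exact absurd (setDist_le_dist hx hy) (not_le.mpr hdy)

lemma Fmono {F : ℝ → ℝ} (hF : OmegaF F) {x y : ℝ} (hx : 0 < x) (hxy : x ≤ y) :
    F x ≤ F y := by
  rcases eq_or_lt_of_le hxy with rfl | hlt
  · exact le_refl _
  · exact (hF.1 x y hx hlt).le

lemma next_unique {A B : Set X} (hp : pProperty A B) {u₁ u₂ v : X}
    (h₁A : u₁ ∈ A) (h₂A : u₂ ∈ A) (hv : v ∈ B)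
    (h1 : dist u₁ v = setDist A B) (h2 : dist u₂ v = setDist A B) : u₁ = u₂ := by
  have := hp u₁ h₁A u₂ h₂A v hv v hv h1 h2
  rw [dist_self] at this
  exact dist_eq_zero.mp this

lemma bpp_unique {A B : Set X} {T : X → X} {F : ℝ → ℝ} (hF : OmegaF F)
    {a b c h τ : ℝ} (ha : 0 < a) (hb : 0 < b) (hc : 0 < c) (hh : 0 < h) (hτ : 0 < τ)
    (hsum : a + b + c + 2 * h = 1) (hprox : GFProximal A B T F a b c h τ)
    {w z : X} (hw : w ∈ A) (hz : z ∈ A)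
    (hwd : dist w (T w) = setDist A B) (hzd : dist z (T z) = setDist A B) : w = z := by
  by_contra hne
  have hd : 0 < dist w z := dist_pos.mpr hne
  have key := hprox w hw z hz w hw z hz hwd hzd hne
  rw [dist_self, dist_self, dist_comm z w] at key
  have heq : a * dist w z + b * 0 + c * 0 + h * (dist w z + dist w z)
      = (a + 2 * h) * dist w z := by ring
  rw [heq] at key
  have hlt : (a + 2 * h) * dist w z < dist w z := by nlinarith
  have hpos : 0 < (a + 2 * h) * dist w z := by positivity
  have := hF.1 _ _ hpos hlt
  linarith

set_option maxHeartbeats 2000000 in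
lemma main_conv {X : Type*} [MetricSpace X] [CompleteSpace X] (A B : Set X)
    (hB : B.Nonempty) (hAc : IsClosed A)
    (hac : approxCompact A B) (hp : pProperty A B)
    (T : X → X) (hT : ∀ x ∈ A, T x ∈ B) (hTA0 : ∀ x ∈ A0 A B, T x ∈ B0 A B)
    (F : ℝ → ℝ) (hF : OmegaF F) (a b c h τ : ℝ)
    (ha : 0 < a) (hb : 0 < b) (hc : 0 < c) (hh : 0 < h) (hτ : 0 < τ)
    (hsum : a + b + c + 2 * h = 1)
    (hprox : GFProximal A B T F a b c h τ)
    (s : ℕ → X) (smem : ∀ n, s n ∈ A)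
    (sd : ∀ n, dist (s (n + 1)) (T (s n)) = setDist A B) :
    ∃ z ∈ A, dist z (T z) = setDist A B ∧ Tendsto s atTop (nhds z) := by
  by_cases hcase : ∃ n, s (n + 1) = s n
  · -- eventually constant
    obtain ⟨n₀, hn₀⟩ := hcase
    have hconst : ∀ m, s (n₀ + m) = s n₀ := by
      intro m
      induction m with
      | zero => rfl
      | succ m ih =>
        have e1 : dist (s (n₀ + m + 1)) (T (s n₀)) = setDist A B := by
          have := sd (n₀ + m); rwa [ih] at this
        have e2 : dist (s (n₀ + 1)) (T (s n₀)) = setDist A B := sd n₀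
        have : s (n₀ + m + 1) = s (n₀ + 1) :=
          next_unique hp (smem _) (smem _) (hT _ (smem n₀)) e1 e2
        calc s (n₀ + (m + 1)) = s (n₀ + 1) := this
        _ = s n₀ := hn₀
    refine ⟨s n₀, smem n₀, ?_, ?_⟩
    · calc dist (s n₀) (T (s n₀)) = dist (s (n₀ + 1)) (T (s n₀)) := by rw [hn₀]
      _ = setDist A B := sd n₀
    · apply Tendsto.congr' (f₁ := fun _ => s n₀) _ tendsto_const_nhds
      filter_upwards [eventually_ge_atTop n₀] with m hm
      have h5 := hconst (m - n₀)
      rw [Nat.add_sub_cancel' hm] at h5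
      exact h5.symm
  · push_neg at hcase
    have dpos : ∀ n, 0 < dist (s n) (s (n + 1)) :=
      fun n => dist_pos.mpr (fun e => hcase n e.symm)
    -- key step inequality
    have key : ∀ n, τ + F (dist (s (n + 1)) (s (n + 2))) ≤ F (dist (s n) (s (n + 1))) := by
      intro n
      have hpx := hprox (s (n + 1)) (smem _) (s (n + 2)) (smem _) (s n) (smem _)
        (s (n + 1)) (smem _) (sd n) (sd (n + 1)) (Ne.symm (hcase (n + 1)))
      rw [dist_comm (s (n + 1)) (s n), dist_comm (s (n + 2)) (s (n + 1)), dist_self] at hpx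
      have htri : dist (s (n + 2)) (s n) ≤ dist (s (n + 1)) (s (n + 2)) + dist (s n) (s (n + 1)) := by
        calc dist (s (n + 2)) (s n) ≤ dist (s (n + 2)) (s (n + 1)) + dist (s (n + 1)) (s n) :=
          dist_triangle _ _ _
        _ = dist (s (n + 1)) (s (n + 2)) + dist (s n) (s (n + 1)) := by
          rw [dist_comm (s (n + 2)) (s (n + 1)), dist_comm (s (n + 1)) (s n)]
      set D0 := dist (s n) (s (n + 1)) with hD0
      set D1 := dist (s (n + 1)) (s (n + 2)) with hD1
      set arg := a * D0 + b * D0 + c * D1 + h * (dist (s (n + 2)) (s n) + 0) with harg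
      have hD0pos : 0 < D0 := dpos n
      have hD1pos : 0 < D1 := dpos (n + 1)
      have hdnn : 0 ≤ dist (s (n + 2)) (s n) := dist_nonneg
      have hargpos : 0 < arg := by rw [harg]; nlinarith
      have hA' : D1 < D0 := by
        by_contra hle
        push_neg at hle
        have h1 : arg ≤ D1 := by rw [harg]; nlinarith
        have h2 : F arg ≤ F D1 := Fmono hF hargpos h1
        linarith
      have h1 : arg ≤ D0 := by rw [harg]; nlinarith
      have h2 : F arg ≤ F D0 := Fmono hF hargpos h1
      linarith
    -- F (d n) ≤ F (d 0) - n τ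
    have Fd_le : ∀ n : ℕ, F (dist (s n) (s (n + 1))) ≤ F (dist (s 0) (s 1)) - n * τ := by
      intro n
      induction n with
      | zero => simp
      | succ n ih =>
        have := key n
        push_cast
        push_cast at ih
        linarith
    have FtoBot : Tendsto (fun n => F (dist (s n) (s (n + 1)))) atTop atBot := by
      apply tendsto_atBot_mono Fd_le
      have h1 : Tendsto (fun n : ℕ => (n : ℝ) * τ) atTop atTop :=
        tendsto_natCast_atTop_atTop.atTop_mul_const hτ
      have h2 : Tendsto (fun n : ℕ => -((n : ℝ) * τ)) atTop atBot :=
        tendsto_neg_atTop_atBot.comp h1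
      have h3 := tendsto_atBot_add_const_left atTop (F (dist (s 0) (s 1))) h2
      refine h3.congr (fun n => by ring)
    have dto0 : Tendsto (fun n => dist (s n) (s (n + 1))) atTop (nhds 0) :=
      (hF.2.1 _ dpos).mpr FtoBot
    obtain ⟨k, hk, hklim⟩ := hF.2.2
    have hd0' : Tendsto (fun n => dist (s n) (s (n + 1))) atTop (nhdsWithin 0 (Set.Ioi 0)) :=
      tendsto_nhdsWithin_of_tendsto_nhds_of_eventually_within _ dto0
        (Eventually.of_forall dpos)
    have hkd : Tendsto (fun n => (dist (s n) (s (n + 1))) ^ k * F (dist (s n) (s (n + 1))))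
        atTop (nhds 0) := hklim.comp hd0'
    have dk0 : Tendsto (fun n => (dist (s n) (s (n + 1))) ^ k) atTop (nhds 0) := by
      have := dto0.rpow_const (p := k) (Or.inr hk.1.le)
      rwa [Real.zero_rpow (ne_of_gt hk.1)] at this
    have hnk : Tendsto (fun n : ℕ => (n : ℝ) * (dist (s n) (s (n + 1))) ^ k) atTop (nhds 0) := by
      have hub : ∀ n : ℕ, (n : ℝ) * τ * (dist (s n) (s (n + 1))) ^ k ≤
          (dist (s n) (s (n + 1))) ^ k * F (dist (s 0) (s 1)) -
          (dist (s n) (s (n + 1))) ^ k * F (dist (s n) (s (n + 1))) := by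
        intro n
        have h1 : 0 ≤ (F (dist (s 0) (s 1)) - (n : ℝ) * τ - F (dist (s n) (s (n + 1)))) *
            (dist (s n) (s (n + 1))) ^ k :=
          mul_nonneg (by linarith [Fd_le n]) (Real.rpow_nonneg dist_nonneg k)
        nlinarith
      have hg0 : Tendsto (fun n => (dist (s n) (s (n + 1))) ^ k * F (dist (s 0) (s 1)) -
          (dist (s n) (s (n + 1))) ^ k * F (dist (s n) (s (n + 1)))) atTop (nhds 0) := by
        have := (dk0.mul_const (F (dist (s 0) (s 1)))).sub hkd
        simpa using this
      have hsq : Tendsto (fun n : ℕ => (n : ℝ) * τ * (dist (s n) (s (n + 1))) ^ k)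
          atTop (nhds 0) :=
        squeeze_zero (fun n => by positivity) hub hg0
      have := hsq.mul_const τ⁻¹
      rw [zero_mul] at this
      refine this.congr (fun n => ?_)
      field_simp
    have hev : ∀ᶠ n : ℕ in atTop, (n : ℝ) * (dist (s n) (s (n + 1))) ^ k ≤ 1 :=
      hnk.eventually_le_const (by norm_num)
    obtain ⟨N, hN⟩ := eventually_atTop.mp hev
    have hbound : ∀ n, N + 1 ≤ n → dist (s n) (s (n + 1)) ≤ ((n : ℝ) ^ k⁻¹)⁻¹ := by
      intro n hn
      have hn1 : 1 ≤ n := le_trans (Nat.le_add_left 1 N) hn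
      have hnR : (0 : ℝ) < n := by exact_mod_cast hn1
      have h1 : (dist (s n) (s (n + 1))) ^ k ≤ (n : ℝ)⁻¹ := by
        have h0 := hN n (le_trans (Nat.le_succ N) hn)
        rw [inv_eq_one_div]
        rw [le_div_iff₀ hnR]
        linarith [h0]
      have h2 : ((dist (s n) (s (n + 1))) ^ k) ^ k⁻¹ ≤ ((n : ℝ)⁻¹) ^ k⁻¹ :=
        Real.rpow_le_rpow (Real.rpow_nonneg dist_nonneg k) h1 (inv_nonneg.mpr hk.1.le)
      have h3 : ((dist (s n) (s (n + 1))) ^ k) ^ k⁻¹ = dist (s n) (s (n + 1)) := by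
        rw [← Real.rpow_mul dist_nonneg, mul_inv_cancel₀ (ne_of_gt hk.1), Real.rpow_one]
      have h4 : ((n : ℝ)⁻¹) ^ k⁻¹ = ((n : ℝ) ^ k⁻¹)⁻¹ :=
        Real.inv_rpow (le_of_lt hnR) k⁻¹
      rw [h3, h4] at h2
      exact h2
    have hsum1 : Summable (fun n : ℕ => ((n : ℝ) ^ k⁻¹)⁻¹) :=
      Real.summable_nat_rpow_inv.mpr (one_lt_inv_iff₀.mpr ⟨hk.1, hk.2⟩)
    have hsummd : Summable (fun n => dist (s n) (s (n + 1))) := by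
      rw [← summable_nat_add_iff (N + 1)]
      have hg : Summable (fun n : ℕ => ((((n + (N + 1) : ℕ)) : ℝ) ^ k⁻¹)⁻¹) :=
        (summable_nat_add_iff (N + 1)).mpr hsum1
      exact Summable.of_nonneg_of_le (fun n => dist_nonneg)
        (fun n => hbound (n + (N + 1)) (Nat.le_add_left (N + 1) n)) hg
    have hcauchy : CauchySeq s := cauchySeq_of_summable_dist hsummd
    obtain ⟨z, hz⟩ := cauchySeq_tendsto_of_complete hcauchy
    have hzA : z ∈ A := hAc.mem_of_tendsto hz (Eventually.of_forall smem)
    have hs1z : Tendsto (fun n => s (n + 1)) atTop (nhds z) :=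
      hz.comp (tendsto_add_atTop_nat 1)
    have hzs : Tendsto (fun n => dist z (s (n + 1))) atTop (nhds 0) := by
      have := tendsto_iff_dist_tendsto_zero.mp hs1z
      refine this.congr (fun n => dist_comm _ _)
    have h1 : ∀ n, setDist A B ≤ dist z (T (s n)) :=
      fun n => setDist_le_dist hzA (hT _ (smem n))
    have h2 : ∀ n, dist z (T (s n)) ≤ dist z (s (n + 1)) + setDist A B := fun n => by
      calc dist z (T (s n)) ≤ dist z (s (n + 1)) + dist (s (n + 1)) (T (s n)) :=
        dist_triangle _ _ _
      _ = dist z (s (n + 1)) + setDist A B := by rw [sd n]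
    have hdzT : Tendsto (fun n => dist z (T (s n))) atTop (nhds (setDist A B)) := by
      refine tendsto_of_tendsto_of_tendsto_of_le_of_le tendsto_const_nhds ?_ h1 h2
      have := hzs.add_const (setDist A B)
      simpa using this
    have hinf : Metric.infDist z B = setDist A B := by
      refine le_antisymm ?_ (setDist_le_infDist hzA hB)
      exact ge_of_tendsto' hdzT (fun n => Metric.infDist_le_dist_of_mem (hT _ (smem n)))
    obtain ⟨w, hwB, φ, hφ, hwt⟩ := hac z hzA (fun n => T (s n)) (fun n => hT _ (smem n))
      (by rw [hinf]; exact hdzT)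
    have hdzw : dist z w = setDist A B := by
      have h3 : Tendsto (fun n => dist z (T (s (φ n)))) atTop (nhds (dist z w)) :=
        (tendsto_const_nhds : Tendsto (fun _ : ℕ => z) atTop (nhds z)).dist hwt
      have h4 : Tendsto (fun n => dist z (T (s (φ n)))) atTop (nhds (setDist A B)) :=
        hdzT.comp hφ.tendsto_atTop
      exact tendsto_nhds_unique h3 h4
    have hzA0 : z ∈ A0 A B := ⟨hzA, w, hwB, hdzw⟩
    obtain ⟨hTzB, u, huA, hud⟩ := hTA0 z hzA0
    have huz : u = z := by
      by_contra hne
      have hE : 0 < dist u z := dist_pos.mpr hne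
      have hle : ∀ n, dist (s (n + 1)) u ≤ a * dist (s n) z + b * dist (s (n + 1)) (s n) +
          c * dist u z + h * (dist u (s n) + dist (s (n + 1)) z) := by
        intro n
        by_cases he : s (n + 1) = u
        · rw [he, dist_self]
          have := dist_nonneg (x := s n) (y := z)
          have := dist_nonneg (x := s (n+1)) (y := s n)
          have := dist_nonneg (x := u) (y := s n)
          have := dist_nonneg (x := s (n+1)) (y := z)
          nlinarith
        · have hpx := hprox (s (n + 1)) (smem _) u huA (s n) (smem _) z hzA (sd n) hud he
          set arg := a * dist (s n) z + b * dist (s (n + 1)) (s n) +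
            c * dist u z + h * (dist u (s n) + dist (s (n + 1)) z) with harg
          have hargpos : 0 < arg := by
            rw [harg]
            have := dist_nonneg (x := s n) (y := z)
            have := dist_nonneg (x := s (n+1)) (y := s n)
            have := dist_nonneg (x := u) (y := s n)
            have := dist_nonneg (x := s (n+1)) (y := z)
            nlinarith
          by_contra hcon
          push_neg at hcon
          have := Fmono hF hargpos hcon.le
          linarith
      have hL : Tendsto (fun n => dist (s (n + 1)) u) atTop (nhds (dist z u)) :=
        hs1z.dist tendsto_const_nhds
      have hsnz : Tendsto (fun n => dist (s n) z) atTop (nhds 0) :=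
        tendsto_iff_dist_tendsto_zero.mp hz
      have hss : Tendsto (fun n => dist (s (n + 1)) (s n)) atTop (nhds 0) := by
        refine dto0.congr (fun n => dist_comm _ _)
      have husn : Tendsto (fun n => dist u (s n)) atTop (nhds (dist u z)) :=
        (tendsto_const_nhds : Tendsto (fun _ : ℕ => u) atTop (nhds u)).dist hz
      have hs1zd : Tendsto (fun n => dist (s (n + 1)) z) atTop (nhds 0) :=
        tendsto_iff_dist_tendsto_zero.mp hs1z
      have hR : Tendsto (fun n => a * dist (s n) z + b * dist (s (n + 1)) (s n) +
          c * dist u z + h * (dist u (s n) + dist (s (n + 1)) z)) atTop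
          (nhds (a * 0 + b * 0 + c * dist u z + h * (dist u z + 0))) := by
        exact (((((tendsto_const_nhds.mul hsnz).add
          (tendsto_const_nhds.mul hss)).add tendsto_const_nhds).add
          (tendsto_const_nhds.mul (husn.add hs1zd))))
      have hfin := le_of_tendsto_of_tendsto' hL hR hle
      rw [dist_comm z u] at hfin
      nlinarith
    exact ⟨z, hzA, huz ▸ hud, hz⟩

end helpers

set_option maxHeartbeats 800000 in
theorem stmt12 {X : Type*} [MetricSpace X] [CompleteSpace X] (A B : Set X)
    (hA : A.Nonempty) (hB : B.Nonempty) (hAc : IsClosed A) (hBc : IsClosed B)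
    (hac : approxCompact A B) (hA0 : (A0 A B).Nonempty) (hp : pProperty A B)
    (T : X → X) (hT : ∀ x ∈ A, T x ∈ B) (hTA0 : ∀ x ∈ A0 A B, T x ∈ B0 A B)
    (F : ℝ → ℝ) (hF : OmegaF F) (a b c h τ : ℝ)
    (ha : 0 < a) (hb : 0 < b) (hc : 0 < c) (hh : 0 < h) (hτ : 0 < τ)
    (hsum : a + b + c + 2 * h = 1) (hc1 : c ≠ 1)
    (hprox : GFProximal A B T F a b c h τ) :
    ∀ x₀ ∈ A0 A B,
      (∃! s : ℕ → X, s 0 = x₀ ∧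
        ∀ n, s (n + 1) ∈ A ∧ dist (s (n + 1)) (T (s n)) = setDist A B) ∧
      ∀ s : ℕ → X, s 0 = x₀ →
        (∀ n, s (n + 1) ∈ A ∧ dist (s (n + 1)) (T (s n)) = setDist A B) →
        ∃ z ∈ A, dist z (T z) = setDist A B ∧
          (∀ w ∈ A, dist w (T w) = setDist A B → w = z) ∧
          Tendsto s atTop (nhds z) := by
  intro x₀ hx₀
  haveI : Nonempty X := ⟨hA.some⟩
  have hstep : ∀ x ∈ A0 A B, ∃ u, u ∈ A0 A B ∧ dist u (T x) = setDist A B := by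
    intro x hx
    obtain ⟨hTxB, u, huA, hud⟩ := hTA0 x hx
    exact ⟨u, ⟨huA, T x, hTxB, hud⟩, hud⟩
  choose! g hg1 hg2 using hstep
  set s : ℕ → X := fun n => g^[n] x₀ with hs
  have hs0 : s 0 = x₀ := rfl
  have hssucc : ∀ n, s (n + 1) = g (s n) := fun n => Function.iterate_succ_apply' g n x₀
  have hsA0 : ∀ n, s n ∈ A0 A B := by
    intro n
    induction n with
    | zero => exact hx₀
    | succ n ih => rw [hssucc]; exact hg1 _ ih
  have hsprop : ∀ n, s (n + 1) ∈ A ∧ dist (s (n + 1)) (T (s n)) = setDist A B := by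
    intro n
    refine ⟨(hsA0 (n + 1)).1, ?_⟩
    rw [hssucc]
    exact hg2 _ (hsA0 n)
  constructor
  · refine ⟨s, ⟨hs0, hsprop⟩, ?_⟩
    intro s' hs'
    funext n
    induction n with
    | zero => rw [hs'.1, hs0]
    | succ n ih =>
      have e1 : dist (s' (n + 1)) (T (s n)) = setDist A B := by
        have := (hs'.2 n).2
        rwa [ih] at this
      exact next_unique hp ((hs'.2 n).1) ((hsprop n).1) (hT _ (hsA0 n).1) e1 (hsprop n).2
  · intro s' hs'0 hs'p
    have smem : ∀ n, s' n ∈ A := by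
      intro n
      cases n with
      | zero => rw [hs'0]; exact hx₀.1
      | succ n => exact (hs'p n).1
    obtain ⟨z, hzA, hzd, hzt⟩ := main_conv A B hB hAc hac hp T hT hTA0 F hF a b c h τ
      ha hb hc hh hτ hsum hprox s' smem (fun n => (hs'p n).2)
    exact ⟨z, hzA, hzd,
      fun w hw hwd => bpp_unique hF ha hb hc hh hτ hsum hprox hw hzA hwd hzd, hzt⟩
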